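/- Let X ~ MLFD(λ, α, β) with λ, α, β > 0. Then E[(αX + β − α)_α] = λ + (β − α)_α · P(X = 0) whenever β > α, where (y)_α = Γ(y+α)/Γ(y) denotes the rising factorial. -/

import Mathlib

open Real

noncomputable def mittagLeffler (α β z : ℝ) : ℝ :=
  ∑' k : ℕ, z ^ k / Real.Gamma (α * k + β)

/-- The pmf of the Mittag-Leffler function distribution MLFD(λ, α, β). -/
noncomputable def mlfdPmf (lam α β : ℝ) (k : ℕ) : ℝ :=
  lam ^ k / (Real.Gamma (α * k + β) * mittagLeffler α β lam)

/-! Because `Γ(α(k+1)+β)` cancels, the `(k+1)`-st term of the series is `λ` times the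
probability of `k`, so the series minus its `k = 0` term is `λ ∑ P(k) = λ`. The series converge
because `Γ` outgrows every exponential. -/

open Filter Nat

namespace Real

theorem add_one_rpow_le_Gamma (n : ℕ) {x : ℝ} (hx : n + 2 ≤ x) :
    ((n : ℝ) + 1) ^ (x - n - 2) ≤ Gamma x := by
  obtain ⟨k, hk⟩ : ∃ k, ⌊x⌋₊ = n + 2 + k :=
    ⟨_, (Nat.add_sub_cancel' (Nat.le_floor (by exact_mod_cast hx))).symm⟩
  have hlow : (n : ℝ) + 2 + k ≤ x := by
    exact_mod_cast hk ▸ Nat.floor_le (by linarith : (0 : ℝ) ≤ x)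
  have hupp : x < n + 2 + k + 1 := by exact_mod_cast hk ▸ Nat.lt_floor_add_one x
  calc ((n : ℝ) + 1) ^ (x - n - 2)
      ≤ ((n : ℝ) + 1) ^ ((k + 1 : ℕ) : ℝ) :=
        rpow_le_rpow_of_exponent_le (by linarith) (by push_cast; linarith)
    _ = ((n + 1) ^ (k + 1) : ℕ) := by rw [rpow_natCast]; push_cast; rfl
    _ ≤ ((n + (k + 1))! : ℕ) := by
        gcongr
        exact (Nat.le_mul_of_pos_left _ (factorial_pos n)).trans factorial_mul_pow_le_factorial
    _ = Gamma (n + 2 + k) := by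
        rw [← Gamma_nat_eq_factorial]; push_cast; ring_nf
    _ ≤ Gamma x := Gamma_strictMonoOn_Ici.monotoneOn (by simp; linarith) (by simp; linarith) hlow

theorem exists_pos_mul_rpow_le_Gamma {c : ℝ} (hc : 0 ≤ c) :
    ∃ C > 0, ∀ᶠ x in atTop, C * c ^ x ≤ Gamma x := by
  obtain ⟨n, hn⟩ := exists_nat_ge c
  refine ⟨((n : ℝ) + 1) ^ (-(n + 2 : ℝ)), by positivity, ?_⟩
  filter_upwards [eventually_ge_atTop ((n : ℝ) + 2)] with x hx
  calc ((n : ℝ) + 1) ^ (-(n + 2 : ℝ)) * c ^ x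
      ≤ ((n : ℝ) + 1) ^ (-(n + 2 : ℝ)) * ((n : ℝ) + 1) ^ x := by
        gcongr <;> linarith
    _ = ((n : ℝ) + 1) ^ (x - n - 2) := by rw [← rpow_add (by positivity)]; ring_nf
    _ ≤ Gamma x := add_one_rpow_le_Gamma n hx

end Real

theorem summable_pow_div_Gamma (lam : ℝ) {α : ℝ} (hα : 0 < α) (b : ℝ) :
    Summable fun k : ℕ => lam ^ k / Gamma (α * k + b) := by
  set r := 2 * |lam| + 1
  set c := r ^ α⁻¹
  have hc : 0 < c := by positivity
  obtain ⟨C, hC, hΓ⟩ := exists_pos_mul_rpow_le_Gamma hc.le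
  have hlin : Tendsto (fun k : ℕ => α * k + b) atTop atTop :=
    tendsto_atTop_add_const_right _ _ (tendsto_natCast_atTop_atTop.const_mul_atTop hα)
  refine .of_norm_bounded_eventually_nat (summable_geometric_two.mul_left (C * c ^ b)⁻¹) ?_
  filter_upwards [hlin.eventually hΓ] with k hk
  have hpow : C * c ^ (α * k + b) = C * c ^ b * r ^ k := by
    rw [rpow_add hc, rpow_mul hc.le, rpow_inv_rpow (by positivity) hα.ne', rpow_natCast]
    ring
  have hratio : (|lam| / r) ^ k ≤ (1 / 2) ^ k := by
    refine pow_le_pow_left₀ (by positivity) ?_ k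
    rw [div_le_iff₀ (by positivity)]
    linarith
  rw [hpow] at hk
  calc ‖lam ^ k / Gamma (α * k + b)‖ = |lam| ^ k / Gamma (α * k + b) := by
        rw [norm_div, norm_pow, Real.norm_eq_abs,
          Real.norm_of_nonneg ((by positivity : (0 : ℝ) ≤ _).trans hk)]
    _ ≤ |lam| ^ k / (C * c ^ b * r ^ k) := by gcongr
    _ = (C * c ^ b)⁻¹ * (|lam| / r) ^ k := by rw [div_pow]; field_simp
    _ ≤ (C * c ^ b)⁻¹ * (1 / 2) ^ k := by gcongr

theorem mittagLeffler_pos {lam α β : ℝ} (hα : 0 < α) (hβ : 0 < β) (hlam : 0 ≤ lam) :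
    0 < mittagLeffler α β lam := by
  refine (summable_pow_div_Gamma lam hα β).tsum_pos (fun k => ?_) 0 (by simp [Gamma_pos_of_pos hβ])
  have := Gamma_pos_of_pos (by positivity : 0 < α * k + β)
  positivity

theorem summable_mlfdPmf (lam : ℝ) {α : ℝ} (hα : 0 < α) (β : ℝ) :
    Summable (mlfdPmf lam α β) :=
  ((summable_pow_div_Gamma lam hα β).div_const (mittagLeffler α β lam)).congr fun _ => div_div ..

theorem tsum_mlfdPmf {lam α β : ℝ} (h : mittagLeffler α β lam ≠ 0) :
    ∑' k, mlfdPmf lam α β k = 1 := by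
  simp_rw [mlfdPmf, ← div_div]
  rw [tsum_div_const]
  exact div_self h

theorem Gamma_div_Gamma_mul_mlfdPmf_succ (lam : ℝ) {α β : ℝ} (hα : 0 ≤ α) (hβ : 0 < β) (k : ℕ) :
    Gamma (α * ↑(k + 1) + β - α + α) / Gamma (α * ↑(k + 1) + β - α) * mlfdPmf lam α β (k + 1)
      = lam * mlfdPmf lam α β k := by
  have hΓ := (Gamma_pos_of_pos (by positivity : 0 < α * ↑(k + 1) + β)).ne'
  rw [sub_add_cancel, show α * ↑(k + 1) + β - α = α * k + β by push_cast; ring, mlfdPmf, mlfdPmf,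
    pow_succ]
  field_simp

/-- `E[(αX+β−α)_α] = λ + (β−α)_α P(X=0)` for `β > α`, where `(y)_α = Γ(y+α)/Γ(y)`. -/
theorem mlfd_factorial_moment_identity (lam α β : ℝ) (hlam : 0 < lam) (hα : 0 < α)
    (hβα : α < β) :
    ∑' k : ℕ, (Real.Gamma (α * k + β - α + α) / Real.Gamma (α * k + β - α)) *
        mlfdPmf lam α β k
      = lam + (Real.Gamma (β - α + α) / Real.Gamma (β - α)) * mlfdPmf lam α β 0 := by
  have hβ : 0 < β := hα.trans hβα
  have hshift := Gamma_div_Gamma_mul_mlfdPmf_succ lam hα.le hβ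
  rw [tsum_eq_zero_add' (by simpa only [hshift] using (summable_mlfdPmf lam hα β).mul_left lam)]
  simp only [hshift, tsum_mul_left, tsum_mlfdPmf (mittagLeffler_pos hα hβ hlam.le).ne']
  simp [add_comm]
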